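/- arXiv:2212.12600 — 2 statements merged into one kernel-verified Lean document; each statement's English description precedes it below -/
import Mathlib

section
/- The generalized oscillator algebra d_{2m+2} = K·δ ⊕ V_{2m} ⊕ K·z (with bracket [tδ+u+sz, t'δ+v+s'z] = tδ(v) - t'δ(u) + φ(δ(u),v)z for δ an invertible φ-skew map) is solvable but not nilpotent: the third term of the derived series vanishes while the lower central series stabilizes at V_{2m} ⊕ K·z. -/
/-- The bracket of the generalized oscillator algebra
`d_{2m+2} = K·δ ⊕ V ⊕ K·z`, where `(t, u, s)` stands for `tδ + u + sz`. -/
def oscBr {K V : Type*} [Field K] [AddCommGroup V] [Module K V]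
    (φ : LinearMap.BilinForm K V) (δ : V →ₗ[K] V)
    (X Y : K × V × K) : K × V × K :=
  (0, X.1 • δ Y.2.1 - Y.1 • δ X.2.1, φ (δ X.2.1) Y.2.1)

/-- the generalized oscillator algebra is solvable but not
nilpotent: its derived series vanishes (all triply-nested derived brackets are
zero), while its lower central series stabilizes at `V ⊕ K·z`: both the span
of all brackets and the span of all iterated brackets `[X, [Y, Z]]` equal
`V ⊕ K·z ≠ 0`. -/
theorem stmt_16 {K V : Type*} [Field K] [CharZero K] [AddCommGroup V] [Module K V]
    (m : ℕ) (hm : 1 ≤ m) [FiniteDimensional K V] (hdim : Module.finrank K V = 2 * m)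
    (φ : LinearMap.BilinForm K V)
    (hsym : ∀ u v : V, φ u v = φ v u)
    (hnd : ∀ u : V, (∀ v : V, φ u v = 0) → u = 0)
    (δ : V →ₗ[K] V) (hδbij : Function.Bijective δ)
    (hδskew : ∀ u v : V, φ (δ u) v + φ u (δ v) = 0) :
    (∀ X₁ X₂ X₃ X₄ X₅ X₆ X₇ X₈ : K × V × K,
      oscBr φ δ (oscBr φ δ (oscBr φ δ X₁ X₂) (oscBr φ δ X₃ X₄))
        (oscBr φ δ (oscBr φ δ X₅ X₆) (oscBr φ δ X₇ X₈)) = 0) ∧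
    (Submodule.span K {w : K × V × K | ∃ X Y : K × V × K, oscBr φ δ X Y = w} =
      (⊥ : Submodule K K).prod ((⊤ : Submodule K V).prod (⊤ : Submodule K K))) ∧
    (Submodule.span K
        {w : K × V × K | ∃ X Y Z : K × V × K, oscBr φ δ X (oscBr φ δ Y Z) = w} =
      (⊥ : Submodule K K).prod ((⊤ : Submodule K V).prod (⊤ : Submodule K K))) ∧
    (⊥ : Submodule K K).prod ((⊤ : Submodule K V).prod (⊤ : Submodule K K)) ≠ ⊥ := by
  -- V is nontrivial
  have hpos : 0 < Module.finrank K V := by omega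
  have : Nontrivial V := Module.nontrivial_of_finrank_pos hpos
  obtain ⟨u0, hu0⟩ := exists_ne (0 : V)
  have hδu0 : δ u0 ≠ 0 := fun h => hu0 (hδbij.injective (h.trans (map_zero δ).symm))
  -- a pair with nonzero φ (δ a) b
  have hex : ∃ v0 : V, φ (δ u0) v0 ≠ 0 := by
    by_contra h
    push_neg at h
    exact hδu0 (hnd _ h)
  obtain ⟨v0, hv0⟩ := hex
  set c : K := φ (δ u0) v0 with hc
  -- right inverse of δ
  obtain ⟨δi, hδi⟩ := hδbij.surjective.hasRightInverse
  -- generators lie in the span of single brackets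
  refine ⟨?_, ?_, ?_, ?_⟩
  · intro X₁ X₂ X₃ X₄ X₅ X₆ X₇ X₈
    simp [oscBr, Prod.ext_iff]
  · apply le_antisymm
    · rw [Submodule.span_le]
      rintro w ⟨X, Y, rfl⟩
      simp [oscBr, Submodule.mem_prod]
    · rintro ⟨t, v, s⟩ hw
      simp only [Submodule.mem_prod, Submodule.mem_bot, Submodule.mem_top, and_true] at hw
      subst hw
      have h1 : ((0 : K), v, (0 : K)) ∈ Submodule.span K
          {w : K × V × K | ∃ X Y : K × V × K, oscBr φ δ X Y = w} := by
        apply Submodule.subset_span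
        exact ⟨(1, 0, 0), (0, δi v, 0), by simp [oscBr, hδi v]⟩
      have h2 : ((0 : K), (0 : V), c) ∈ Submodule.span K
          {w : K × V × K | ∃ X Y : K × V × K, oscBr φ δ X Y = w} := by
        apply Submodule.subset_span
        exact ⟨(0, u0, 0), (0, v0, 0), by simp [oscBr, hc]⟩
      have h3 := Submodule.smul_mem _ (s * c⁻¹) h2
      have heq : ((0 : K), v, s) = ((0 : K), v, (0 : K)) + (s * c⁻¹) • (0, (0:V), c) := by
        simp [Prod.ext_iff, smul_smul, mul_assoc, inv_mul_cancel₀ hv0]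
      rw [heq]
      exact Submodule.add_mem _ h1 h3
  · apply le_antisymm
    · rw [Submodule.span_le]
      rintro w ⟨X, Y, Z, rfl⟩
      simp [oscBr, Submodule.mem_prod]
    · rintro ⟨t, v, s⟩ hw
      simp only [Submodule.mem_prod, Submodule.mem_bot, Submodule.mem_top, and_true] at hw
      subst hw
      have h1 : ((0 : K), v, (0 : K)) ∈ Submodule.span K
          {w : K × V × K | ∃ X Y Z : K × V × K, oscBr φ δ X (oscBr φ δ Y Z) = w} := by
        apply Submodule.subset_span
        exact ⟨(1, 0, 0), (1, 0, 0), (0, δi (δi v), 0),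
          by simp [oscBr, hδi (δi v), hδi v]⟩
      have h2 : ((0 : K), (0 : V), c) ∈ Submodule.span K
          {w : K × V × K | ∃ X Y Z : K × V × K, oscBr φ δ X (oscBr φ δ Y Z) = w} := by
        apply Submodule.subset_span
        exact ⟨(0, u0, 0), (1, 0, 0), (0, δi v0, 0),
          by simp [oscBr, hδi v0, hc]⟩
      have h3 := Submodule.smul_mem _ (s * c⁻¹) h2
      have heq : ((0 : K), v, s) = ((0 : K), v, (0 : K)) + (s * c⁻¹) • (0, (0:V), c) := by
        simp [Prod.ext_iff, smul_smul, mul_assoc, inv_mul_cancel₀ hv0]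
      rw [heq]
      exact Submodule.add_mem _ h1 h3
  · intro h
    have : ((0 : K), (0 : V), (1 : K)) ∈
        (⊥ : Submodule K K).prod ((⊤ : Submodule K V).prod (⊤ : Submodule K K)) := by
      simp [Submodule.mem_prod]
    rw [h] at this
    simp [Prod.ext_iff] at this
end

section
/- Let d = d_{2m+2}(1,…,1) be the real oscillator algebra with basis δ, e₁,…,e_{2m}, z and brackets [e_{2i-1},e_{2i}] = z, [δ,e_{2i-1}] = e_{2i}, [δ,e_{2i}] = -e_{2i-1} (all others zero). Every symmetric invariant nondegenerate bilinear form b on d satisfies: b(δ,z) = s ≠ 0, b(e_i,e_j) = s·δ_{ij}, b(δ,e_i) = 0, b(z,e_i) = 0, b(z,z) = 0, for some s ≠ 0 and arbitrary t = b(δ,δ). In particular, the space of symmetric invariant bilinear forms on d is 2-dimensional. -/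
/-!
Invariance alone determines the form: pairing each defining bracket against a basis vector, e.g.
`b(x_i, x_j) = -b([δ, y_i], x_j) = -b(δ, [y_i, x_j])`, expresses every value `b(e_p, e_q)` through
`s = b(δ, z)` and `t = b(δ, δ)`, so every invariant form has the Gram matrix `oscMatrix s t`
(in particular it is symmetric). Conversely, that matrix defines an invariant form for all `s, t`,
a finite check on basis triples. If `s = 0`, then `z` pairs trivially with every basis vector, so
a nondegenerate form has `s ≠ 0`.
-/

open LinearMap (BilinForm)

-- `x i` and `y i` are the paper's `e_{2i-1}` and `e_{2i}`.
abbrev OscIndex (m : ℕ) := Unit ⊕ Fin m ⊕ Fin m ⊕ Unit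

namespace OscIndex
variable {m : ℕ}
abbrev δ : OscIndex m := Sum.inl ()
abbrev x (i : Fin m) : OscIndex m := Sum.inr (Sum.inl i)
abbrev y (i : Fin m) : OscIndex m := Sum.inr (Sum.inr (Sum.inl i))
abbrev z : OscIndex m := Sum.inr (Sum.inr (Sum.inr ()))
end OscIndex

section InvariantForm

variable {R L ι : Type*} [CommRing R] [LieRing L] [LieAlgebra R L]

theorem LinearMap.BilinForm.lie_invariant_of_basis (b : Module.Basis ι R L) (B : BilinForm R L)
    (h : ∀ i j k, B ⁅b i, b j⁆ (b k) = B (b i) ⁅b j, b k⁆) (u v w : L) :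
    B ⁅u, v⁆ w = B u ⁅v, w⁆ := by
  -- both sides as trilinear maps `L → L → L → R`
  have key : (LieAlgebra.ad R L : L →ₗ[R] Module.End R L).compr₂ B =
      (LinearMap.llcomp R L L R).compl₁₂ B (LieAlgebra.ad R L : L →ₗ[R] Module.End R L) :=
    b.ext fun i => b.ext fun j => b.ext fun k => h i j k
  exact DFunLike.congr_fun (LinearMap.congr_fun₂ key u v) w

end InvariantForm

section Oscillator

variable {R L : Type*} [CommRing R] [LieRing L] [LieAlgebra R L] {m : ℕ}

structure IsOscillatorBasis (b : Module.Basis (OscIndex m) R L) : Prop where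
  lie_x_y : ∀ i j, ⁅b (.x i), b (.y j)⁆ = if i = j then b .z else 0
  lie_x_x : ∀ i j, ⁅b (.x i), b (.x j)⁆ = 0
  lie_y_y : ∀ i j, ⁅b (.y i), b (.y j)⁆ = 0
  lie_δ_x : ∀ i, ⁅b .δ, b (.x i)⁆ = b (.y i)
  lie_δ_y : ∀ i, ⁅b .δ, b (.y i)⁆ = -b (.x i)
  lie_δ_z : ⁅b .δ, b .z⁆ = 0
  lie_x_z : ∀ i, ⁅b (.x i), b .z⁆ = 0
  lie_y_z : ∀ i, ⁅b (.y i), b .z⁆ = 0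

namespace IsOscillatorBasis

variable {b : Module.Basis (OscIndex m) R L} (hb : IsOscillatorBasis b)
include hb

theorem lie_y_x (i j : Fin m) : ⁅b (.y i), b (.x j)⁆ = if i = j then -b .z else 0 := by
  rw [← lie_skew, hb.lie_x_y, apply_ite Neg.neg, neg_zero]
  exact if_congr eq_comm rfl rfl

theorem lie_x_δ (i : Fin m) : ⁅b (.x i), b .δ⁆ = -b (.y i) := by
  rw [← lie_skew, hb.lie_δ_x]

theorem lie_y_δ (i : Fin m) : ⁅b (.y i), b .δ⁆ = b (.x i) := by
  rw [← lie_skew, hb.lie_δ_y, neg_neg]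

theorem lie_z_δ : ⁅b .z, b .δ⁆ = 0 := by
  rw [← lie_skew, hb.lie_δ_z, neg_zero]

theorem lie_z_x (i : Fin m) : ⁅b .z, b (.x i)⁆ = 0 := by
  rw [← lie_skew, hb.lie_x_z, neg_zero]

theorem lie_z_y (i : Fin m) : ⁅b .z, b (.y i)⁆ = 0 := by
  rw [← lie_skew, hb.lie_y_z, neg_zero]

section Values

variable {bf : BilinForm R L} (hinv : ∀ u v w, bf ⁅u, v⁆ w = bf u ⁅v, w⁆)
include hinv

theorem apply_δ_x (j : Fin m) : bf (b .δ) (b (.x j)) = 0 := by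
  simpa [hb.lie_δ_y] using hinv (b .δ) (b .δ) (b (.y j))

theorem apply_δ_y (j : Fin m) : bf (b .δ) (b (.y j)) = 0 := by
  simpa [hb.lie_δ_x] using (hinv (b .δ) (b .δ) (b (.x j))).symm

theorem apply_z_x (j : Fin m) : bf (b .z) (b (.x j)) = 0 := by
  simpa [hb.lie_z_δ, hb.lie_δ_y] using hinv (b .z) (b .δ) (b (.y j))

theorem apply_z_y (j : Fin m) : bf (b .z) (b (.y j)) = 0 := by
  simpa [hb.lie_z_δ, hb.lie_δ_x] using (hinv (b .z) (b .δ) (b (.x j))).symm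

theorem apply_x_δ (j : Fin m) : bf (b (.x j)) (b .δ) = 0 := by
  simpa [hb.lie_y_δ] using hinv (b (.y j)) (b .δ) (b .δ)

theorem apply_y_δ (j : Fin m) : bf (b (.y j)) (b .δ) = 0 := by
  simpa [hb.lie_x_δ] using hinv (b (.x j)) (b .δ) (b .δ)

theorem apply_x_z (j : Fin m) : bf (b (.x j)) (b .z) = 0 := by
  simpa [hb.lie_y_δ, hb.lie_δ_z] using hinv (b (.y j)) (b .δ) (b .z)

theorem apply_y_z (j : Fin m) : bf (b (.y j)) (b .z) = 0 := by
  simpa [hb.lie_x_δ, hb.lie_δ_z] using hinv (b (.x j)) (b .δ) (b .z)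

theorem apply_x_x (i j : Fin m) :
    bf (b (.x i)) (b (.x j)) = if i = j then bf (b .δ) (b .z) else 0 := by
  have h := hinv (b .δ) (b (.y i)) (b (.x j))
  rw [hb.lie_δ_y, hb.lie_y_x] at h
  split_ifs at h ⊢ <;> simpa using h

theorem apply_y_y (i j : Fin m) :
    bf (b (.y i)) (b (.y j)) = if i = j then bf (b .δ) (b .z) else 0 := by
  have h := hinv (b .δ) (b (.x i)) (b (.y j))
  rw [hb.lie_δ_x, hb.lie_x_y] at h
  split_ifs at h ⊢ <;> simpa using h

theorem apply_y_x (i j : Fin m) : bf (b (.y i)) (b (.x j)) = 0 := by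
  simpa [hb.lie_δ_x, hb.lie_x_x] using hinv (b .δ) (b (.x i)) (b (.x j))

theorem apply_x_y (i j : Fin m) : bf (b (.x i)) (b (.y j)) = 0 := by
  have h := hinv (b (.x i)) (b .δ) (b (.x j))
  rw [hb.lie_x_δ, hb.lie_δ_x, map_neg, LinearMap.neg_apply, hb.apply_y_x hinv] at h
  simpa using h.symm

theorem apply_z_z (hm : 0 < m) : bf (b .z) (b .z) = 0 := by
  simpa [hb.lie_x_y, hb.lie_y_z] using hinv (b (.x ⟨0, hm⟩)) (b (.y ⟨0, hm⟩)) (b .z)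

theorem apply_z_δ (hm : 0 < m) : bf (b .z) (b .δ) = bf (b .δ) (b .z) := by
  have h := hinv (b (.x ⟨0, hm⟩)) (b (.y ⟨0, hm⟩)) (b .δ)
  rwa [hb.lie_x_y, if_pos rfl, hb.lie_y_δ, hb.apply_x_x hinv, if_pos rfl] at h

end Values

end IsOscillatorBasis

variable (R) in
def oscMatrix (m : ℕ) (s t : R) : Matrix (OscIndex m) (OscIndex m) R
  | Sum.inl _, Sum.inl _ => t
  | Sum.inl _, Sum.inr (Sum.inr (Sum.inr _)) => s
  | Sum.inr (Sum.inr (Sum.inr _)), Sum.inl _ => s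
  | Sum.inr (Sum.inl i), Sum.inr (Sum.inl j) => if i = j then s else 0
  | Sum.inr (Sum.inr (Sum.inl i)), Sum.inr (Sum.inr (Sum.inl j)) => if i = j then s else 0
  | _, _ => 0

noncomputable def oscForm (b : Module.Basis (OscIndex m) R L) (s t : R) : BilinForm R L :=
  Matrix.toLinearMap₂ b b (oscMatrix R m s t)

variable (b : Module.Basis (OscIndex m) R L)

theorem oscForm_apply_basis (s t : R) (p q : OscIndex m) :
    oscForm b s t (b p) (b q) = oscMatrix R m s t p q :=
  Matrix.toLinearMap₂_apply_basis ..

theorem oscForm_comm (s t : R) (u v : L) : oscForm b s t u v = oscForm b s t v u := by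
  suffices oscForm b s t = (oscForm b s t).flip from LinearMap.congr_fun₂ this u v
  refine b.ext fun p => b.ext fun q => ?_
  rcases p with ⟨⟨⟩⟩ | i | i | ⟨⟨⟩⟩ <;> rcases q with ⟨⟨⟩⟩ | j | j | ⟨⟨⟩⟩ <;>
    simp [oscForm_apply_basis, oscMatrix, eq_comm]

theorem oscForm_eq_smul_add_smul (s t : R) : oscForm b s t = s • oscForm b 1 0 + t • oscForm b 0 1 := by
  refine b.ext fun p => b.ext fun q => ?_
  rcases p with ⟨⟨⟩⟩ | i | i | ⟨⟨⟩⟩ <;> rcases q with ⟨⟨⟩⟩ | j | j | ⟨⟨⟩⟩ <;>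
    simp [oscForm_apply_basis, oscMatrix]

theorem linearIndependent_oscForm : LinearIndependent R ![oscForm b (1 : R) 0, oscForm b 0 1] := by
  refine (LinearIndependent.pair_iff (R := R) (M := BilinForm R L)).mpr fun s t hst => ?_
  rw [← oscForm_eq_smul_add_smul] at hst
  have hs := LinearMap.congr_fun₂ hst (b .δ) (b .z)
  have ht := LinearMap.congr_fun₂ hst (b .δ) (b .δ)
  simp only [oscForm_apply_basis, LinearMap.zero_apply] at hs ht
  exact ⟨hs, ht⟩

variable {b}

theorem IsOscillatorBasis.oscForm_lie (hb : IsOscillatorBasis b) (s t : R) (u v w : L) :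
    oscForm b s t ⁅u, v⁆ w = oscForm b s t u ⁅v, w⁆ := by
  refine LinearMap.BilinForm.lie_invariant_of_basis b _ (fun p q r => ?_) u v w
  rcases p with ⟨⟨⟩⟩ | i | i | ⟨⟨⟩⟩ <;> rcases q with ⟨⟨⟩⟩ | j | j | ⟨⟨⟩⟩ <;>
    rcases r with ⟨⟨⟩⟩ | k | k | ⟨⟨⟩⟩ <;>
    simp only [hb.lie_x_y, hb.lie_x_x, hb.lie_y_y, hb.lie_δ_x, hb.lie_δ_y, hb.lie_δ_z,
      hb.lie_x_z, hb.lie_y_z, hb.lie_y_x, hb.lie_x_δ, hb.lie_y_δ, hb.lie_z_δ, hb.lie_z_x,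
      hb.lie_z_y, lie_self, map_neg, map_zero, LinearMap.neg_apply, LinearMap.zero_apply] <;>
    (try split_ifs) <;> simp_all [oscForm_apply_basis, oscMatrix]

theorem IsOscillatorBasis.eq_oscForm (hb : IsOscillatorBasis b) (hm : 0 < m) {bf : BilinForm R L}
    (hinv : ∀ u v w, bf ⁅u, v⁆ w = bf u ⁅v, w⁆) :
    bf = oscForm b (bf (b .δ) (b .z)) (bf (b .δ) (b .δ)) := by
  refine b.ext fun p => b.ext fun q => ?_
  rcases p with ⟨⟨⟩⟩ | i | i | ⟨⟨⟩⟩ <;> rcases q with ⟨⟨⟩⟩ | j | j | ⟨⟨⟩⟩ <;>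
    simp [oscForm_apply_basis, oscMatrix, hb.apply_δ_x hinv, hb.apply_δ_y hinv,
      hb.apply_x_δ hinv, hb.apply_x_x hinv, hb.apply_x_y hinv, hb.apply_x_z hinv,
      hb.apply_y_δ hinv, hb.apply_y_x hinv, hb.apply_y_y hinv, hb.apply_y_z hinv,
      hb.apply_z_δ hinv hm, hb.apply_z_x hinv, hb.apply_z_y hinv, hb.apply_z_z hinv hm]

theorem IsOscillatorBasis.apply_δ_z_ne_zero [Nontrivial R] (hb : IsOscillatorBasis b) (hm : 0 < m)
    {bf : BilinForm R L} (hinv : ∀ u v w, bf ⁅u, v⁆ w = bf u ⁅v, w⁆)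
    (hnd : ∀ u, (∀ v, bf u v = 0) → u = 0) :
    bf (b .δ) (b .z) ≠ 0 := by
  intro h
  have hz : bf (b .z) = 0 := by
    refine b.ext fun p => ?_
    rw [hb.eq_oscForm hm hinv, h]
    rcases p with ⟨⟨⟩⟩ | i | i | ⟨⟨⟩⟩ <;> simp [oscForm_apply_basis, oscMatrix]
  exact b.ne_zero .z (hnd _ fun v => by rw [hz, LinearMap.zero_apply])

end Oscillator

/-- every symmetric invariant nondegenerate bilinear form `bf`
on the real oscillator algebra `d_{2m+2}(1,…,1)` (basis `δ, x₁,…,x_m,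
y₁,…,y_m, z` with `[x_i,y_i] = z`, `[δ,x_i] = y_i`, `[δ,y_i] = -x_i`) is
determined by `s = bf(δ,z) ≠ 0` and `t = bf(δ,δ)`: `bf(e_i,e_j) = s·δᵢⱼ`,
all other pairings zero; and the space of symmetric invariant forms is
2-dimensional. -/
theorem stmt_18 {L : Type*} [LieRing L] [LieAlgebra ℝ L]
    (m : ℕ) (hm : 1 ≤ m)
    (b : Module.Basis (Unit ⊕ Fin m ⊕ Fin m ⊕ Unit) ℝ L)
    -- notation: δ = b (.inl ()), xᵢ = b (.inr (.inl i)),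
    -- yᵢ = b (.inr (.inr (.inl i))), z = b (.inr (.inr (.inr ())))
    (hxy : ∀ i j : Fin m, ⁅b (Sum.inr (Sum.inl i)), b (Sum.inr (Sum.inr (Sum.inl j)))⁆ =
      if i = j then b (Sum.inr (Sum.inr (Sum.inr ()))) else 0)
    (hxx : ∀ i j : Fin m, ⁅b (Sum.inr (Sum.inl i)), b (Sum.inr (Sum.inl j))⁆ = 0)
    (hyy : ∀ i j : Fin m,
      ⁅b (Sum.inr (Sum.inr (Sum.inl i))), b (Sum.inr (Sum.inr (Sum.inl j)))⁆ = 0)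
    (hδx : ∀ i : Fin m, ⁅b (Sum.inl ()), b (Sum.inr (Sum.inl i))⁆ =
      b (Sum.inr (Sum.inr (Sum.inl i))))
    (hδy : ∀ i : Fin m, ⁅b (Sum.inl ()), b (Sum.inr (Sum.inr (Sum.inl i)))⁆ =
      - b (Sum.inr (Sum.inl i)))
    (hδz : ⁅b (Sum.inl ()), b (Sum.inr (Sum.inr (Sum.inr ())))⁆ = 0)
    (hxz : ∀ i : Fin m, ⁅b (Sum.inr (Sum.inl i)), b (Sum.inr (Sum.inr (Sum.inr ())))⁆ = 0)
    (hyz : ∀ i : Fin m,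
      ⁅b (Sum.inr (Sum.inr (Sum.inl i))), b (Sum.inr (Sum.inr (Sum.inr ())))⁆ = 0) :
    (∀ bf : LinearMap.BilinForm ℝ L,
      (∀ u v : L, bf u v = bf v u) →
      (∀ u v w : L, bf ⁅u, v⁆ w = bf u ⁅v, w⁆) →
      (∀ u : L, (∀ v : L, bf u v = 0) → u = 0) →
      bf (b (Sum.inl ())) (b (Sum.inr (Sum.inr (Sum.inr ())))) ≠ 0 ∧
      (∀ i j : Fin m, bf (b (Sum.inr (Sum.inl i))) (b (Sum.inr (Sum.inl j))) =
        if i = j then bf (b (Sum.inl ())) (b (Sum.inr (Sum.inr (Sum.inr ())))) else 0) ∧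
      (∀ i j : Fin m, bf (b (Sum.inr (Sum.inr (Sum.inl i))))
          (b (Sum.inr (Sum.inr (Sum.inl j)))) =
        if i = j then bf (b (Sum.inl ())) (b (Sum.inr (Sum.inr (Sum.inr ())))) else 0) ∧
      (∀ i j : Fin m,
        bf (b (Sum.inr (Sum.inl i))) (b (Sum.inr (Sum.inr (Sum.inl j)))) = 0) ∧
      (∀ i : Fin m, bf (b (Sum.inl ())) (b (Sum.inr (Sum.inl i))) = 0) ∧
      (∀ i : Fin m, bf (b (Sum.inl ())) (b (Sum.inr (Sum.inr (Sum.inl i)))) = 0) ∧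
      (∀ i : Fin m,
        bf (b (Sum.inr (Sum.inr (Sum.inr ())))) (b (Sum.inr (Sum.inl i))) = 0) ∧
      (∀ i : Fin m,
        bf (b (Sum.inr (Sum.inr (Sum.inr ())))) (b (Sum.inr (Sum.inr (Sum.inl i)))) = 0) ∧
      bf (b (Sum.inr (Sum.inr (Sum.inr ()))))
        (b (Sum.inr (Sum.inr (Sum.inr ())))) = 0) ∧
    (∃ b1 b2 : LinearMap.BilinForm ℝ L,
      (∀ u v : L, b1 u v = b1 v u) ∧ (∀ u v w : L, b1 ⁅u, v⁆ w = b1 u ⁅v, w⁆) ∧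
      (∀ u v : L, b2 u v = b2 v u) ∧ (∀ u v w : L, b2 ⁅u, v⁆ w = b2 u ⁅v, w⁆) ∧
      LinearIndependent ℝ ![b1, b2] ∧
      ∀ bf : LinearMap.BilinForm ℝ L,
        (∀ u v : L, bf u v = bf v u) → (∀ u v w : L, bf ⁅u, v⁆ w = bf u ⁅v, w⁆) →
        ∃ s t : ℝ, bf = s • b1 + t • b2) := by
  have hb : IsOscillatorBasis b := ⟨hxy, hxx, hyy, hδx, hδy, hδz, hxz, hyz⟩
  refine ⟨fun bf _ hinv hnd => ?_, oscForm b 1 0, oscForm b 0 1, ?_⟩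
  · exact ⟨hb.apply_δ_z_ne_zero hm hinv hnd, hb.apply_x_x hinv, hb.apply_y_y hinv,
      hb.apply_x_y hinv, hb.apply_δ_x hinv, hb.apply_δ_y hinv, hb.apply_z_x hinv,
      hb.apply_z_y hinv, hb.apply_z_z hinv hm⟩
  · exact ⟨oscForm_comm b 1 0, hb.oscForm_lie 1 0, oscForm_comm b 0 1, hb.oscForm_lie 0 1,
      linearIndependent_oscForm b,
      fun bf _ hinv => ⟨_, _, (hb.eq_oscForm hm hinv).trans (oscForm_eq_smul_add_smul b _ _)⟩⟩
end
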